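/- Let q be an odd prime power and let H_6 be the group of order 16 with presentation ⟨a, b, c | a^4 = b^4 = c^2 = 1, ba = a^3 b, ca = ac, cb = bc, a^2 = b^2⟩ (isomorphic to Q_8 × ℤ_2). Then 𝔽_qH_6 ≅ 𝔽_q^{(8)} ⊕ M_2(𝔽_q)^{(2)}. -/

import Mathlib

/-!
Map `a, b, c` to `(χ₀, A, A)`, `(χ₁, B, B)`, `(χ₂, 1, -1)` in `F⁸ × M₂(F)²`, where the sign
patterns of `χ₀, χ₁, χ₂` list the eight characters `a, b, c ↦ ±1`, and `A = [[x, y], [y, -x]]`,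
`B = [[0, 1], [-1, 0]]` with `x² + y² = -1` (solvable over every finite field) satisfy
`A² = B² = -1`, `BA = -AB`. When `2 ≠ 0` the induced algebra map is onto: `(1 + a²)/2` and
`(1 ± c)/2` are block idempotents, the characters separate the eight coordinates, and
`1, A, B, AB` span `M₂(F)`. The normal form `aⁱbʲcᵏ` (`i < 4`, `j, k < 2`) bounds
`|H₆| ≤ 16 = dim (F⁸ × M₂(F)²)`, so the map is an isomorphism.
-/

/-- The relators of the presentation
`H₆ = ⟨a, b, c | a⁴ = b⁴ = c² = 1, ba = a³b, ca = ac, cb = bc, a² = b²⟩` of a group of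
order 16 (isomorphic to `Q₈ × ℤ₂`). -/
def H6Rels : Set (FreeGroup (Fin 3)) :=
  { (FreeGroup.of 0) ^ 4, (FreeGroup.of 1) ^ 4, (FreeGroup.of 2) ^ 2,
    (FreeGroup.of 1) * (FreeGroup.of 0) * ((FreeGroup.of 0) ^ 3 * (FreeGroup.of 1))⁻¹,
    (FreeGroup.of 2) * (FreeGroup.of 0) * ((FreeGroup.of 0) * (FreeGroup.of 2))⁻¹,
    (FreeGroup.of 2) * (FreeGroup.of 1) * ((FreeGroup.of 1) * (FreeGroup.of 2))⁻¹,
    (FreeGroup.of 0) ^ 2 * ((FreeGroup.of 1) ^ 2)⁻¹ }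

namespace Subalgebra

theorem eq_top_of_one_zero_mem {R A B : Type*} [CommRing R] [Ring A] [Ring B] [Algebra R A] [Algebra R B]
    (S : Subalgebra R (A × B)) (he : ((1, 0) : A × B) ∈ S)
    (hA : S.map (AlgHom.fst R A B) = ⊤) (hB : S.map (AlgHom.snd R A B) = ⊤) : S = ⊤ := by
  refine eq_top_iff.mpr fun ⟨u, v⟩ _ => ?_
  obtain ⟨p, hp, rfl⟩ := mem_map.mp (hA ▸ Algebra.mem_top : u ∈ S.map _)
  obtain ⟨r, hr, rfl⟩ := mem_map.mp (hB ▸ Algebra.mem_top : v ∈ S.map _)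
  have hsplit : (AlgHom.fst R A B p, AlgHom.snd R A B r) = (1, 0) * p + (r - (1, 0) * r) := by
    ext <;> simp
  rw [hsplit]
  exact add_mem (mul_mem he hp) (sub_mem hr (mul_mem he hr))

theorem eq_top_of_single_one_mem {R ι : Type*} [CommSemiring R] [Fintype ι] [DecidableEq ι]
    {A : ι → Type*} [∀ i, Semiring (A i)] [∀ i, Algebra R (A i)] (S : Subalgebra R (∀ i, A i))
    (hsingle : ∀ i, Pi.single i 1 ∈ S) (hproj : ∀ i, S.map (Pi.evalAlgHom R A i) = ⊤) :
    S = ⊤ := by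
  refine eq_top_iff.mpr fun f _ => ?_
  choose g hg hgf using fun i => (hproj i ▸ Algebra.mem_top : f i ∈ S.map (Pi.evalAlgHom R A i))
  have hsingle_mul (i) : Pi.single i 1 * g i = Pi.single i (f i) := by
    rw [← Pi.single_mul_left, one_mul]; exact congrArg _ (hgf i)
  rw [← Finset.univ_sum_single f, ← Finset.sum_congr rfl fun i _ => hsingle_mul i]
  exact sum_mem fun i _ => mul_mem (hsingle i) (hg i)

theorem eq_top_of_separatesPoints {K ι : Type*} [Field K] [Finite ι] (S : Subalgebra K (ι → K))
    (h : ∀ i j, i ≠ j → ∃ f ∈ S, f i ≠ f j) : S = ⊤ := by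
  classical
  have := Fintype.ofFinite ι
  refine eq_top_of_single_one_mem S (fun i => ?_) fun i => eq_top_iff.mpr fun x _ =>
    ⟨algebraMap K _ x, S.algebraMap_mem x, rfl⟩
  have hbump (j : ι) : ∃ e ∈ S, e i = 1 ∧ (j ≠ i → e j = 0) := by
    by_cases hji : j = i
    · exact ⟨1, S.one_mem, rfl, fun hne => (hne hji).elim⟩
    obtain ⟨f, hf, hne⟩ := h i j (Ne.symm hji)
    refine ⟨(f i - f j)⁻¹ • (f - algebraMap K _ (f j)),
      S.smul_mem (S.sub_mem hf (S.algebraMap_mem _)) _, ?_, fun _ => ?_⟩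
    · simp [inv_mul_cancel₀ (sub_ne_zero.mpr hne)]
    · simp
  choose e he hei hej using hbump
  have hprod : Pi.single i 1 = ∏ j, e j := by
    ext k
    rw [Finset.prod_apply]
    by_cases hki : k = i
    · subst hki; simp [hei]
    · rw [Pi.single_eq_of_ne hki]
      exact (Finset.prod_eq_zero (f := fun j => e j k) (Finset.mem_univ k) (hej k hki)).symm
  rw [hprod]
  exact prod_mem fun j _ => he j

end Subalgebra

namespace H6

structure SatisfiesRels {M : Type*} [Monoid M] (α β γ : M) : Prop where
  pow_four_a : α ^ 4 = 1
  pow_four_b : β ^ 4 = 1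
  sq_c : γ ^ 2 = 1
  b_mul_a : β * α = α ^ 3 * β
  c_mul_a : γ * α = α * γ
  c_mul_b : γ * β = β * γ
  sq_a_eq_sq_b : α ^ 2 = β ^ 2

abbrev G := PresentedGroup H6Rels

theorem satisfiesRels_of :
    SatisfiesRels (PresentedGroup.of 0 : G) (PresentedGroup.of 1) (PresentedGroup.of 2) where
  pow_four_a := PresentedGroup.one_of_mem (x := FreeGroup.of 0 ^ 4) (by simp [H6Rels])
  pow_four_b := PresentedGroup.one_of_mem (x := FreeGroup.of 1 ^ 4) (by simp [H6Rels])
  sq_c := PresentedGroup.one_of_mem (x := FreeGroup.of 2 ^ 2) (by simp [H6Rels])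
  b_mul_a := PresentedGroup.mk_eq_mk_of_mul_inv_mem (by simp [H6Rels])
  c_mul_a := PresentedGroup.mk_eq_mk_of_mul_inv_mem (by simp [H6Rels])
  c_mul_b := PresentedGroup.mk_eq_mk_of_mul_inv_mem (by simp [H6Rels])
  sq_a_eq_sq_b := PresentedGroup.mk_eq_mk_of_mul_inv_mem (by simp [H6Rels])

namespace SatisfiesRels

theorem pi {ι : Type*} {M : ι → Type*} [∀ i, Monoid (M i)] {α β γ : ∀ i, M i}
    (h : ∀ i, SatisfiesRels (α i) (β i) (γ i)) : SatisfiesRels α β γ where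
  pow_four_a := funext fun i => (h i).pow_four_a
  pow_four_b := funext fun i => (h i).pow_four_b
  sq_c := funext fun i => (h i).sq_c
  b_mul_a := funext fun i => (h i).b_mul_a
  c_mul_a := funext fun i => (h i).c_mul_a
  c_mul_b := funext fun i => (h i).c_mul_b
  sq_a_eq_sq_b := funext fun i => (h i).sq_a_eq_sq_b

theorem of_sq_eq_one {M : Type*} [CommMonoid M] {α β γ : M} (hα : α ^ 2 = 1) (hβ : β ^ 2 = 1)
    (hγ : γ ^ 2 = 1) : SatisfiesRels α β γ where
  pow_four_a := by rw [show 4 = 2 * 2 by rfl, pow_mul, hα, one_pow]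
  pow_four_b := by rw [show 4 = 2 * 2 by rfl, pow_mul, hβ, one_pow]
  sq_c := hγ
  b_mul_a := by rw [pow_succ, hα, one_mul, mul_comm]
  c_mul_a := mul_comm γ α
  c_mul_b := mul_comm γ β
  sq_a_eq_sq_b := hα.trans hβ.symm

theorem of_quaternion {R : Type*} [Ring R] {α β γ : R} (hα : α * α = -1) (hβ : β * β = -1)
    (hβα : β * α = -(α * β)) (hγ : γ * γ = 1) (hγα : Commute γ α)
    (hγβ : Commute γ β) :
    SatisfiesRels α β γ where
  pow_four_a := by rw [show 4 = 2 * 2 by rfl, pow_mul, sq α, hα, neg_one_sq]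
  pow_four_b := by rw [show 4 = 2 * 2 by rfl, pow_mul, sq β, hβ, neg_one_sq]
  sq_c := by rw [sq, hγ]
  b_mul_a := by rw [pow_succ, sq, hα, hβα]; simp
  c_mul_a := hγα.eq
  c_mul_b := hγβ.eq
  sq_a_eq_sq_b := by rw [sq, sq, hα, hβ]

theorem lift_relator_eq_one {M : Type*} [Group M] {α β γ : M} (h : SatisfiesRels α β γ) :
    ∀ r ∈ H6Rels, FreeGroup.lift ![α, β, γ] r = 1 := by
  simp [H6Rels, h.pow_four_a, h.pow_four_b, h.sq_c, h.b_mul_a, h.c_mul_a, h.c_mul_b,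
    h.sq_a_eq_sq_b]

section Monoid

variable {M : Type*} [Monoid M] {α β γ : M}

theorem prodMk {N : Type*} [Monoid N] {α' β' γ' : N} (h : SatisfiesRels α β γ)
    (h' : SatisfiesRels α' β' γ') : SatisfiesRels (α, α') (β, β') (γ, γ') where
  pow_four_a := Prod.ext h.pow_four_a h'.pow_four_a
  pow_four_b := Prod.ext h.pow_four_b h'.pow_four_b
  sq_c := Prod.ext h.sq_c h'.sq_c
  b_mul_a := Prod.ext h.b_mul_a h'.b_mul_a
  c_mul_a := Prod.ext h.c_mul_a h'.c_mul_a
  c_mul_b := Prod.ext h.c_mul_b h'.c_mul_b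
  sq_a_eq_sq_b := Prod.ext h.sq_a_eq_sq_b h'.sq_a_eq_sq_b

theorem units (h : SatisfiesRels α β γ) :
    SatisfiesRels (Units.ofPowEqOne α 4 h.pow_four_a four_ne_zero)
      (Units.ofPowEqOne β 4 h.pow_four_b four_ne_zero)
      (Units.ofPowEqOne γ 2 h.sq_c two_ne_zero) where
  pow_four_a := Units.ext h.pow_four_a
  pow_four_b := Units.ext h.pow_four_b
  sq_c := Units.ext h.sq_c
  b_mul_a := Units.ext h.b_mul_a
  c_mul_a := Units.ext h.c_mul_a
  c_mul_b := Units.ext h.c_mul_b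
  sq_a_eq_sq_b := Units.ext h.sq_a_eq_sq_b

noncomputable def lift (h : SatisfiesRels α β γ) : G →* M :=
  (Units.coeHom M).comp (PresentedGroup.toGroup h.units.lift_relator_eq_one)

theorem lift_of (h : SatisfiesRels α β γ) (i : Fin 3) :
    h.lift (PresentedGroup.of i) = ![α, β, γ] i := by
  fin_cases i <;> simp [lift, PresentedGroup.toGroup.of]

end Monoid

section Group

variable {M : Type*} [Group M] {α β γ : M}

theorem b_pow_mul_a (h : SatisfiesRels α β γ) (j : ℕ) : β ^ j * α = α ^ 3 ^ j * β ^ j := by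
  induction j with
  | zero => simp
  | succ j ih =>
    have hconj (n : ℕ) : β * α ^ n = α ^ (3 * n) * β := by
      rw [pow_mul]; exact (SemiconjBy.pow_right h.b_mul_a n).eq
    rw [pow_succ', mul_assoc, ih, ← mul_assoc, hconj, pow_succ, mul_comm 3, mul_assoc]

theorem exists_pow_eq (h : SatisfiesRels α β γ) {g : M}
    (hg : g ∈ Subgroup.closure {α, β, γ}) :
    ∃ i j k : ℕ, α ^ i * β ^ j * γ ^ k = g := by
  have hfin : ∀ x ∈ ({α, β, γ} : Set M), IsOfFinOrder x := by
    simp only [Set.mem_insert_iff, Set.mem_singleton_iff, forall_eq_or_imp, forall_eq]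
    exact ⟨isOfFinOrder_iff_pow_eq_one.mpr ⟨4, by norm_num, h.pow_four_a⟩,
      isOfFinOrder_iff_pow_eq_one.mpr ⟨4, by norm_num, h.pow_four_b⟩,
      isOfFinOrder_iff_pow_eq_one.mpr ⟨2, by norm_num, h.sq_c⟩⟩
  rw [← Subgroup.mem_toSubmonoid, Subgroup.closure_toSubmonoid_of_isOfFinOrder hfin] at hg
  induction hg using Submonoid.closure_induction_right with
  | one => exact ⟨0, 0, 0, by simp⟩
  | mul_right x _ y hy ih =>
    obtain ⟨i, j, k, rfl⟩ := ih
    rcases hy with hy | hy | hy <;> subst y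
    · refine ⟨i + 3 ^ j, j, k, ?_⟩
      rw [mul_assoc _ (γ ^ k), (Commute.pow_left h.c_mul_a k).eq, mul_assoc (α ^ i),
        ← mul_assoc (β ^ j), h.b_pow_mul_a]
      simp only [pow_add, mul_assoc]
    · refine ⟨i, j + 1, k, ?_⟩
      rw [mul_assoc _ (γ ^ k), (Commute.pow_left h.c_mul_b k).eq]
      simp only [pow_succ, mul_assoc]
    · exact ⟨i, j, k + 1, by simp only [pow_succ, mul_assoc]⟩

theorem exists_normalForm (h : SatisfiesRels α β γ) {g : M}
    (hg : g ∈ Subgroup.closure {α, β, γ}) :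
    ∃ t : Fin 4 × Fin 2 × Fin 2,
      α ^ (t.1 : ℕ) * β ^ (t.2.1 : ℕ) * γ ^ (t.2.2 : ℕ) = g := by
  obtain ⟨i, j, k, rfl⟩ := h.exists_pow_eq hg
  refine ⟨(Fin.ofNat 4 (i + 2 * (j / 2)), Fin.ofNat 2 j, Fin.ofNat 2 k), ?_⟩
  have hb : β ^ j = α ^ (2 * (j / 2)) * β ^ (j % 2) := by
    conv_lhs => rw [← Nat.div_add_mod j 2]
    rw [pow_add, pow_mul, pow_mul, h.sq_a_eq_sq_b]
  simp only [Fin.val_ofNat]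
  rw [← pow_eq_pow_mod _ h.pow_four_a, ← pow_eq_pow_mod _ h.sq_c, hb, pow_add,
    mul_assoc (α ^ i)]

end Group

end SatisfiesRels

theorem normalForm_surjective : Function.Surjective fun t : Fin 4 × Fin 2 × Fin 2 =>
    (PresentedGroup.of 0 : G) ^ (t.1 : ℕ) * PresentedGroup.of 1 ^ (t.2.1 : ℕ) *
      PresentedGroup.of 2 ^ (t.2.2 : ℕ) := fun g => by
  have hgen : Set.range (PresentedGroup.of : Fin 3 → G) =
      {PresentedGroup.of 0, PresentedGroup.of 1, PresentedGroup.of 2} := by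
    simp [Set.ext_iff, Fin.exists_fin_succ, eq_comm]
  refine satisfiesRels_of.exists_normalForm ?_
  rw [← hgen, PresentedGroup.closure_range_of]
  trivial

instance : Finite G := Finite.of_surjective _ normalForm_surjective

theorem card_le : Nat.card G ≤ 16 := by
  simpa using Nat.card_le_card_of_surjective _ normalForm_surjective

section Representation

variable {F : Type*} [Field F] {x y : F}

-- When `x² + y² = -1`, `matA x y` and `matB` realise the quaternion units `i` and `j`.
def matA (x y : F) : Matrix (Fin 2) (Fin 2) F := !![x, y; y, -x]

def matB : Matrix (Fin 2) (Fin 2) F := !![0, 1; -1, 0]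

theorem matA_mul_self (hxy : x ^ 2 + y ^ 2 = -1) : matA x y * matA x y = -1 := by
  ext i j
  fin_cases i <;> fin_cases j <;> simp [matA, Matrix.mul_apply]
  · linear_combination hxy
  · ring
  · ring
  · linear_combination hxy

theorem matB_mul_self : (matB : Matrix (Fin 2) (Fin 2) F) * matB = -1 := by
  ext i j
  fin_cases i <;> fin_cases j <;> simp [matB]

theorem matB_mul_matA : matB * matA x y = -(matA x y * matB) := by
  ext i j
  fin_cases i <;> fin_cases j <;> simp [matA, matB]

-- The coefficient of `X ∈ {1, A, B, AB}` is `tr (T * X⁻¹)`.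
theorem two_smul_eq_matA_matB (hxy : x ^ 2 + y ^ 2 = -1) (T : Matrix (Fin 2) (Fin 2) F) :
    (2 : F) • T = (T 0 0 + T 1 1) • 1
      + (-(x * (T 0 0 - T 1 1)) - y * (T 0 1 + T 1 0)) • matA x y
      + (T 0 1 - T 1 0) • matB
      + (y * (T 0 0 - T 1 1) - x * (T 0 1 + T 1 0)) • (matA x y * matB) := by
  ext i j
  fin_cases i <;> fin_cases j <;> simp [matA, matB]
  · linear_combination (T 0 0 - T 1 1) * hxy
  · linear_combination (T 0 1 + T 1 0) * hxy
  · linear_combination (T 0 1 + T 1 0) * hxy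
  · linear_combination (T 1 1 - T 0 0) * hxy

theorem adjoin_matA_matB (h2 : (2 : F) ≠ 0) (hxy : x ^ 2 + y ^ 2 = -1) :
    Algebra.adjoin F {matA x y, matB} = ⊤ := by
  refine eq_top_iff.mpr fun T _ => ?_
  have hA : matA x y ∈ Algebra.adjoin F {matA x y, matB} := Algebra.subset_adjoin (by simp)
  have hB : matB ∈ Algebra.adjoin F {matA x y, matB} := Algebra.subset_adjoin (by simp)
  rw [← inv_smul_smul₀ h2 T, two_smul_eq_matA_matB hxy]
  exact Subalgebra.smul_mem _ (add_mem (add_mem (add_mem (Subalgebra.smul_mem _ (one_mem _) _)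
    (Subalgebra.smul_mem _ hA _)) (Subalgebra.smul_mem _ hB _))
    (Subalgebra.smul_mem _ (mul_mem hA hB) _)) _

-- The character numbered `i` sends the `k`-th generator to `-1` iff bit `k` of `i` is set.
def chi (k : ℕ) : Fin 8 → F := fun i => if i.val.testBit k then -1 else 1

theorem chi_sq (k : ℕ) : (chi k : Fin 8 → F) ^ 2 = 1 := by
  ext i
  simp only [chi, Pi.pow_apply, Pi.one_apply]
  split_ifs <;> simp

theorem exists_chi_ne (h2 : (2 : F) ≠ 0) {i j : Fin 8} (hij : i ≠ j) :
    ∃ k : Fin 3, (chi k i : F) ≠ chi k j := by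
  have hbits : ∀ i j : Fin 8, i ≠ j → ∃ k : Fin 3, i.val.testBit k ≠ j.val.testBit k := by
    decide
  obtain ⟨k, hk⟩ := hbits i j hij
  refine ⟨k, fun h => h2 ?_⟩
  unfold chi at h
  cases hi : i.val.testBit k <;> cases hj : j.val.testBit k <;> simp [hi, hj] at h hk
  · linear_combination h
  · linear_combination -h

theorem adjoin_chi_eq_top (h2 : (2 : F) ≠ 0) :
    Algebra.adjoin F {chi 0, chi 1, chi 2} = (⊤ : Subalgebra F (Fin 8 → F)) := by
  refine Subalgebra.eq_top_of_separatesPoints _ fun i j hij => ?_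
  obtain ⟨k, hk⟩ := exists_chi_ne h2 hij
  refine ⟨chi k, Algebra.subset_adjoin ?_, hk⟩
  fin_cases k <;> simp

theorem adjoin_matrixBlocks_eq_top (h2 : (2 : F) ≠ 0) (hxy : x ^ 2 + y ^ 2 = -1) :
    Algebra.adjoin F {fun _ => matA x y, fun _ => matB, ![1, -1]} =
      (⊤ : Subalgebra F (Fin 2 → Matrix (Fin 2) (Fin 2) F)) := by
  have hC : ![1, -1] ∈ Algebra.adjoin F
      {fun _ => matA x y, fun _ => matB, (![1, -1] : Fin 2 → Matrix (Fin 2) (Fin 2) F)} :=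
    Algebra.subset_adjoin (by simp)
  apply Subalgebra.eq_top_of_single_one_mem
  · intro j
    fin_cases j
    · have h : Pi.single 0 1 =
          (2⁻¹ : F) • (1 + ![1, -1] : Fin 2 → Matrix (Fin 2) (Fin 2) F) := by
        ext k : 1
        fin_cases k <;> simp only [Pi.smul_apply, Pi.add_apply, Pi.one_apply] <;>
          simp [← two_smul F, smul_smul, inv_mul_cancel₀ h2]
      simp only [Fin.zero_eta, h]
      exact Subalgebra.smul_mem _ (add_mem (one_mem _) hC) _
    · have h : Pi.single 1 1 =
          (2⁻¹ : F) • (1 - ![1, -1] : Fin 2 → Matrix (Fin 2) (Fin 2) F) := by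
        ext k : 1
        fin_cases k <;> simp only [Pi.smul_apply, Pi.sub_apply, Pi.one_apply] <;>
          simp [← two_smul F, smul_smul, inv_mul_cancel₀ h2]
      simp only [Fin.mk_one, h]
      exact Subalgebra.smul_mem _ (sub_mem (one_mem _) hC) _
  · intro j
    rw [AlgHom.map_adjoin, eq_top_iff, ← adjoin_matA_matB h2 hxy]
    apply Algebra.adjoin_mono
    simp [Set.insert_subset_iff]

abbrev Wedderburn (F : Type*) [Field F] := (Fin 8 → F) × (Fin 2 → Matrix (Fin 2) (Fin 2) F)

def genA (x y : F) : Wedderburn F := (chi 0, fun _ => matA x y)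

def genB : Wedderburn F := (chi 1, fun _ => matB)

def genC : Wedderburn F := (chi 2, ![1, -1])

theorem satisfiesRels_gen (hxy : x ^ 2 + y ^ 2 = -1) :
    SatisfiesRels (genA x y) genB (genC : Wedderburn F) :=
  (SatisfiesRels.of_sq_eq_one (chi_sq 0) (chi_sq 1) (chi_sq 2)).prodMk <|
    SatisfiesRels.pi fun j => by
      fin_cases j
      · exact .of_quaternion (matA_mul_self hxy) matB_mul_self matB_mul_matA (one_mul 1)
          (.one_left _) (.one_left _)
      · exact .of_quaternion (matA_mul_self hxy) matB_mul_self matB_mul_matA (by simp)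
          (.neg_one_left _) (.neg_one_left _)

theorem adjoin_gen_eq_top (h2 : (2 : F) ≠ 0) (hxy : x ^ 2 + y ^ 2 = -1) :
    Algebra.adjoin F {genA x y, genB, genC} = ⊤ := by
  have hA : genA x y ∈ Algebra.adjoin F {genA x y, genB, genC} := Algebra.subset_adjoin (by simp)
  apply Subalgebra.eq_top_of_one_zero_mem
  · have hsq : ((1, 0) : Wedderburn F) = (2⁻¹ : F) • (1 + genA x y * genA x y) := by
      ext i
      · simp [genA, ← sq, chi_sq, ← two_mul, mul_inv_cancel₀ h2]
      · simp [genA, matA_mul_self hxy]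
    rw [hsq]
    exact Subalgebra.smul_mem _ (add_mem (one_mem _) (mul_mem hA hA)) _
  · rw [AlgHom.map_adjoin, ← adjoin_chi_eq_top h2]
    simp [Set.image_insert_eq, genA, genB, genC]
  · rw [AlgHom.map_adjoin, ← adjoin_matrixBlocks_eq_top h2 hxy]
    simp [Set.image_insert_eq, genA, genB, genC]

noncomputable def toWedderburn (hxy : x ^ 2 + y ^ 2 = -1) :
    MonoidAlgebra F G →ₐ[F] Wedderburn F :=
  MonoidAlgebra.lift F (Wedderburn F) G (satisfiesRels_gen hxy).lift

theorem toWedderburn_surjective (h2 : (2 : F) ≠ 0) (hxy : x ^ 2 + y ^ 2 = -1) :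
    Function.Surjective (toWedderburn hxy) := by
  have hgen (i : Fin 3) : toWedderburn hxy (MonoidAlgebra.of F G (PresentedGroup.of i)) =
      ![genA x y, genB, genC] i := by
    rw [toWedderburn, MonoidAlgebra.lift_of, SatisfiesRels.lift_of]
  rw [← AlgHom.range_eq_top, eq_top_iff, ← adjoin_gen_eq_top h2 hxy, Algebra.adjoin_le_iff]
  rintro _ (rfl | rfl | rfl)
  exacts [⟨_, hgen 0⟩, ⟨_, hgen 1⟩, ⟨_, hgen 2⟩]

theorem finrank_wedderburn : Module.finrank F (Wedderburn F) = 16 := by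
  simp [Module.finrank_prod, Module.finrank_pi_fintype, Module.finrank_matrix]

theorem toWedderburn_bijective (h2 : (2 : F) ≠ 0) (hxy : x ^ 2 + y ^ 2 = -1) :
    Function.Bijective (toWedderburn hxy) := by
  have hsurj := toWedderburn_surjective h2 hxy
  have := Fintype.ofFinite G
  let e : MonoidAlgebra F G ≃ₗ[F] G →₀ F := MonoidAlgebra.coeffLinearEquiv F
  have : Module.Finite F (MonoidAlgebra F G) := .equiv e.symm
  have hdim : Module.finrank F (MonoidAlgebra F G) = Module.finrank F (Wedderburn F) := by
    refine le_antisymm ?_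
      (LinearMap.finrank_le_finrank_of_surjective (f := (toWedderburn hxy).toLinearMap) hsurj)
    rw [e.finrank_eq, Module.finrank_finsupp_self, ← Nat.card_eq_fintype_card, finrank_wedderburn]
    exact card_le
  exact ⟨(LinearMap.injective_iff_surjective_of_finrank_eq_finrank hdim
    (f := (toWedderburn hxy).toLinearMap)).mpr hsurj, hsurj⟩

noncomputable def algEquiv (h2 : (2 : F) ≠ 0) (hxy : x ^ 2 + y ^ 2 = -1) :
    MonoidAlgebra F G ≃ₐ[F] Wedderburn F :=
  AlgEquiv.ofBijective _ (toWedderburn_bijective h2 hxy)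

end Representation

end H6

/-- Wedderburn decomposition of `𝔽_q H₆`, `q` an odd prime power. -/
theorem stmt_12 (ℓ m q : ℕ) [Fact ℓ.Prime] (hm : 0 < m) (hq : q = ℓ ^ m) (hodd : Odd q) :
    Nonempty (MonoidAlgebra (GaloisField ℓ m) (PresentedGroup H6Rels) ≃+*
      ((Fin 8 → GaloisField ℓ m) ×
        (Fin 2 → Matrix (Fin 2) (Fin 2) (GaloisField ℓ m)))) := by
  have hℓ : Odd ℓ := (Nat.odd_pow_iff hm.ne').mp (hq ▸ hodd)
  have h2 : (2 : GaloisField ℓ m) ≠ 0 := Ring.two_ne_zero <| by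
    rw [ringChar.eq (GaloisField ℓ m) ℓ]
    rintro rfl
    exact Nat.not_odd_iff_even.mpr even_two hℓ
  obtain ⟨x, y, hxy⟩ := CharP.sq_add_sq (GaloisField ℓ m) ℓ (-1)
  exact ⟨(H6.algEquiv h2 (x := (x : GaloisField ℓ m)) (y := y)
    (by simpa using hxy)).toRingEquiv⟩
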